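/- Let A(w), B(w), C(w) ∈ ℂ[[w⁻¹]] and suppose R(w) = A(w)I + B(w)P + C(w)Q satisfies (w(X⊗1) + ½ζ[X⊗1,P−Q])R(w) = R(w)(w(X⊗1) − ½ζ[X⊗1,P−Q]) modulo the terms with 1⊗X which commute with R(w), for all X ∈ g_N with N > 2. Then ζA(w) = −wB(w) and (w − ζκ)C(w) = ζA(w); consequently R(w) = A(w)(I − (ζ/w)P + (ζ/(w−ζκ))Q). -/

import Mathlib

open scoped Matrix Kronecker BigOperators

namespace Yangian

noncomputable def idxSet (n : ℕ) (zero : Bool) : Finset ℤ :=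
  if zero then Finset.Icc (-(n : ℤ)) n else (Finset.Icc (-(n : ℤ)) n).erase 0

abbrev Idx (n : ℕ) (zero : Bool) := {i : ℤ // i ∈ idxSet n zero}

def negIdx {n : ℕ} {zero : Bool} : Idx n zero → Idx n zero :=
  fun ⟨x, hx⟩ => ⟨-x, by
    cases zero with
    | false =>
        simp only [idxSet, Bool.false_eq_true, if_false, Finset.mem_erase,
          Finset.mem_Icc] at hx ⊢
        omega
    | true =>
        simp only [idxSet, if_true, Finset.mem_Icc] at hx ⊢
        omega⟩

noncomputable def theta (sympl : Bool) (i j : ℤ) : ℂ :=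
  if sympl then ((i.sign * j.sign : ℤ) : ℂ) else 1

noncomputable def E {n : ℕ} {zero : Bool} (i j : Idx n zero) :
    Matrix (Idx n zero) (Idx n zero) ℂ :=
  Matrix.single i j 1

noncomputable def F {n : ℕ} {zero : Bool} (sympl : Bool) (i j : Idx n zero) :
    Matrix (Idx n zero) (Idx n zero) ℂ :=
  E i j - theta sympl i.1 j.1 • E (negIdx j) (negIdx i)

noncomputable def Pmat (n : ℕ) (zero : Bool) :
    Matrix (Idx n zero × Idx n zero) (Idx n zero × Idx n zero) ℂ :=
  ∑ i : Idx n zero, ∑ j : Idx n zero, E i j ⊗ₖ E j i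

noncomputable def Qmat (n : ℕ) (zero sympl : Bool) :
    Matrix (Idx n zero × Idx n zero) (Idx n zero × Idx n zero) ℂ :=
  ∑ i : Idx n zero, ∑ j : Idx n zero,
    theta sympl i.1 j.1 • (E i j ⊗ₖ E (negIdx i) (negIdx j))

noncomputable def kappa (n : ℕ) (zero sympl : Bool) : ℂ :=
  ((if zero then 2*n+1 else 2*n : ℕ) : ℂ) / 2 + (if sympl then 1 else -1)

noncomputable def Rmat (n : ℕ) (zero sympl : Bool) (ζ u : ℂ) :
    Matrix (Idx n zero × Idx n zero) (Idx n zero × Idx n zero) ℂ :=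
  1 - (ζ / u) • Pmat n zero + (ζ / (u - ζ * kappa n zero sympl)) • Qmat n zero sympl


-- ===== auxiliary lemmas =====
section Aux

variable {n : ℕ} {zero sympl : Bool}

@[simp] lemma negIdx_val (i : Idx n zero) : (negIdx i).1 = -i.1 := by
  rcases i with ⟨x, hx⟩; rfl

@[simp] lemma negIdx_negIdx (i : Idx n zero) : negIdx (negIdx i) = i := by
  ext; simp

@[simp] lemma negIdx_inj {i j : Idx n zero} : negIdx i = negIdx j ↔ i = j := by
  constructor
  · intro h
    have := congrArg negIdx h
    simpa using this
  · rintro rfl; rfl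

lemma negIdx_eq_iff {i j : Idx n zero} : negIdx i = j ↔ i = negIdx j := by
  constructor <;> rintro rfl <;> simp

lemma eq_negIdx_iff {i j : Idx n zero} : i = negIdx j ↔ negIdx i = j := by
  constructor <;> rintro rfl <;> simp

lemma E_apply (i j p q : Idx n zero) :
    E i j p q = if p = i ∧ q = j then 1 else 0 := by
  simp only [E, Matrix.single, Matrix.of_apply]
  congr 1
  simp [eq_comm, and_comm]

lemma Pmat_apply (p q : Idx n zero × Idx n zero) :
    Pmat n zero p q = if p.1 = q.2 ∧ p.2 = q.1 then 1 else 0 := by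
  obtain ⟨i, k⟩ := p; obtain ⟨j, l⟩ := q
  simp only [Pmat, Matrix.sum_apply, Matrix.kroneckerMap_apply, E_apply]
  rw [Finset.sum_comm]
  simp [ite_and, Finset.sum_ite_eq, Finset.sum_ite_eq']
  simp [eq_comm]

lemma Qmat_apply (p q : Idx n zero × Idx n zero) :
    Qmat n zero sympl p q =
      if p.2 = negIdx p.1 ∧ q.2 = negIdx q.1 then theta sympl p.1.1 q.1.1 else 0 := by
  obtain ⟨i, k⟩ := p; obtain ⟨j, l⟩ := q
  simp only [Qmat, Matrix.sum_apply, Matrix.smul_apply, Matrix.kroneckerMap_apply, E_apply]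
  rw [Fintype.sum_eq_single i (fun x hx => by simp [Ne.symm hx]),
    Fintype.sum_eq_single j (fun x hx => by simp [Ne.symm hx])]
  simp [ite_and]

lemma kron_one_apply (X : Matrix (Idx n zero) (Idx n zero) ℂ)
    (p q : Idx n zero × Idx n zero) :
    (X ⊗ₖ (1 : Matrix (Idx n zero) (Idx n zero) ℂ)) p q =
      if p.2 = q.2 then X p.1 q.1 else 0 := by
  obtain ⟨i, k⟩ := p; obtain ⟨j, l⟩ := q
  simp [Matrix.kroneckerMap_apply, Matrix.one_apply]

lemma mul_P_apply (M : Matrix (Idx n zero × Idx n zero) (Idx n zero × Idx n zero) ℂ)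
    (p q : Idx n zero × Idx n zero) :
    (M * Pmat n zero) p q = M p (q.2, q.1) := by
  obtain ⟨j, l⟩ := q
  simp [Matrix.mul_apply, Pmat_apply, Fintype.sum_prod_type, ite_and, mul_ite,
    Finset.sum_ite_eq, Finset.sum_ite_eq']

lemma P_mul_apply (M : Matrix (Idx n zero × Idx n zero) (Idx n zero × Idx n zero) ℂ)
    (p q : Idx n zero × Idx n zero) :
    (Pmat n zero * M) p q = M (p.2, p.1) q := by
  obtain ⟨i, k⟩ := p
  simp [Matrix.mul_apply, Pmat_apply, Fintype.sum_prod_type, ite_and, ite_mul,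
    Finset.sum_ite_eq, Finset.sum_ite_eq']

lemma mul_Q_apply (M : Matrix (Idx n zero × Idx n zero) (Idx n zero × Idx n zero) ℂ)
    (p q : Idx n zero × Idx n zero) :
    (M * Qmat n zero sympl) p q =
      if q.2 = negIdx q.1 then
        ∑ m : Idx n zero, theta sympl m.1 q.1.1 * M p (m, negIdx m) else 0 := by
  obtain ⟨j, l⟩ := q
  simp only [Matrix.mul_apply, Qmat_apply, Fintype.sum_prod_type]
  simp [ite_and, mul_ite, Finset.sum_ite_eq, Finset.sum_ite_eq', mul_comm]

lemma Q_mul_apply (M : Matrix (Idx n zero × Idx n zero) (Idx n zero × Idx n zero) ℂ)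
    (p q : Idx n zero × Idx n zero) :
    (Qmat n zero sympl * M) p q =
      if p.2 = negIdx p.1 then
        ∑ m : Idx n zero, theta sympl p.1.1 m.1 * M (m, negIdx m) q else 0 := by
  obtain ⟨i, k⟩ := p
  simp only [Matrix.mul_apply, Qmat_apply, Fintype.sum_prod_type]
  simp [ite_and, ite_mul, Finset.sum_ite_eq, Finset.sum_ite_eq', mul_comm]

lemma TQ_apply (X : Matrix (Idx n zero) (Idx n zero) ℂ)
    (p q : Idx n zero × Idx n zero) :
    ((X ⊗ₖ (1 : Matrix (Idx n zero) (Idx n zero) ℂ)) * Qmat n zero sympl) p q =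
      if q.2 = negIdx q.1 then
        theta sympl (-p.2.1) q.1.1 * X p.1 (negIdx p.2) else 0 := by
  rw [mul_Q_apply]
  split
  · rw [Fintype.sum_eq_single (negIdx p.2)
      (fun m hm => by
        simp only [kron_one_apply]
        rw [if_neg (fun h => hm (by rw [h, negIdx_negIdx])), mul_zero])]
    simp [kron_one_apply]
  · rfl

lemma QT_apply (X : Matrix (Idx n zero) (Idx n zero) ℂ)
    (p q : Idx n zero × Idx n zero) :
    (Qmat n zero sympl * (X ⊗ₖ (1 : Matrix (Idx n zero) (Idx n zero) ℂ))) p q =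
      if p.2 = negIdx p.1 then
        theta sympl p.1.1 (-q.2.1) * X (negIdx q.2) q.1 else 0 := by
  rw [Q_mul_apply]
  split
  · rw [Fintype.sum_eq_single (negIdx q.2)
      (fun m hm => by
        simp only [kron_one_apply]
        rw [if_neg (by simpa [negIdx_eq_iff] using hm), mul_zero])]
    simp [kron_one_apply]
  · rfl

lemma L_apply (v z : ℂ) (X : Matrix (Idx n zero) (Idx n zero) ℂ)
    (p q : Idx n zero × Idx n zero) :
    (v • (X ⊗ₖ (1 : Matrix (Idx n zero) (Idx n zero) ℂ)) +
      (z / 2) • ((X ⊗ₖ (1 : Matrix (Idx n zero) (Idx n zero) ℂ)) *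
          (Pmat n zero - Qmat n zero sympl)
        - (Pmat n zero - Qmat n zero sympl) *
          (X ⊗ₖ (1 : Matrix (Idx n zero) (Idx n zero) ℂ)))) p q =
      v * (if p.2 = q.2 then X p.1 q.1 else 0)
      + z / 2 *
        ((if p.2 = q.1 then X p.1 q.2 else 0)
         - (if q.2 = negIdx q.1 then theta sympl (-p.2.1) q.1.1 * X p.1 (negIdx p.2) else 0)
         - (if p.1 = q.2 then X p.2 q.1 else 0)
         + (if p.2 = negIdx p.1 then theta sympl p.1.1 (-q.2.1) * X (negIdx q.2) q.1 else 0)) := by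
  rw [sub_mul, mul_sub]
  simp only [Matrix.add_apply, Matrix.sub_apply, Matrix.smul_apply, smul_eq_mul,
    kron_one_apply, mul_P_apply, P_mul_apply, TQ_apply, QT_apply]
  ring

lemma L_apply' (v z : ℂ) (X : Matrix (Idx n zero) (Idx n zero) ℂ)
    (i k j l : Idx n zero) :
    (v • (X ⊗ₖ (1 : Matrix (Idx n zero) (Idx n zero) ℂ)) +
      (z / 2) • ((X ⊗ₖ (1 : Matrix (Idx n zero) (Idx n zero) ℂ)) *
          (Pmat n zero - Qmat n zero sympl)
        - (Pmat n zero - Qmat n zero sympl) *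
          (X ⊗ₖ (1 : Matrix (Idx n zero) (Idx n zero) ℂ)))) (i, k) (j, l) =
      v * (if k = l then X i j else 0)
      + z / 2 *
        ((if k = j then X i l else 0)
         - (if l = negIdx j then theta sympl (-k.1) j.1 * X i (negIdx k) else 0)
         - (if i = l then X k j else 0)
         + (if k = negIdx i then theta sympl i.1 (-l.1) * X (negIdx l) j else 0)) :=
  L_apply v z X (i, k) (j, l)

lemma mul_R_apply (A B C : ℂ)
    (M : Matrix (Idx n zero × Idx n zero) (Idx n zero × Idx n zero) ℂ)
    (i k j l : Idx n zero) :
    (M * (A • (1 : Matrix (Idx n zero × Idx n zero) (Idx n zero × Idx n zero) ℂ)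
        + B • Pmat n zero + C • Qmat n zero sympl)) (i, k) (j, l) =
      A * M (i, k) (j, l) + B * M (i, k) (l, j)
      + C * (if l = negIdx j then
          ∑ m : Idx n zero, theta sympl m.1 j.1 * M (i, k) (m, negIdx m) else 0) := by
  rw [mul_add, mul_add, Matrix.mul_smul, Matrix.mul_smul, Matrix.mul_smul, mul_one]
  simp only [Matrix.add_apply, Matrix.smul_apply, smul_eq_mul, mul_P_apply, mul_Q_apply]

lemma R_mul_apply (A B C : ℂ)
    (M : Matrix (Idx n zero × Idx n zero) (Idx n zero × Idx n zero) ℂ)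
    (i k j l : Idx n zero) :
    ((A • (1 : Matrix (Idx n zero × Idx n zero) (Idx n zero × Idx n zero) ℂ)
        + B • Pmat n zero + C • Qmat n zero sympl) * M) (i, k) (j, l) =
      A * M (i, k) (j, l) + B * M (k, i) (j, l)
      + C * (if k = negIdx i then
          ∑ m : Idx n zero, theta sympl i.1 m.1 * M (m, negIdx m) (j, l) else 0) := by
  rw [add_mul, add_mul, Matrix.smul_mul, Matrix.smul_mul, Matrix.smul_mul, one_mul]
  simp only [Matrix.add_apply, Matrix.smul_apply, smul_eq_mul, P_mul_apply, Q_mul_apply]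

lemma sign_dichotomy (x : ℤ) (h : x ≠ 0) : x.sign = 1 ∨ x.sign = -1 := by
  rcases lt_trichotomy x 0 with h1 | h1 | h1
  · right; exact Int.sign_eq_neg_one_of_neg h1
  · exact absurd h1 h
  · left; exact Int.sign_eq_one_of_pos h1

lemma theta_same {s : Bool} {x : ℤ} (hx : s = true → x ≠ 0) : theta s x x = 1 := by
  cases s with
  | false => simp [theta]
  | true =>
    simp only [theta, if_true]
    rcases sign_dichotomy x (hx rfl) with h | h <;> rw [h] <;> norm_num

lemma theta_neg_left {s : Bool} {x : ℤ} (hx : s = true → x ≠ 0) :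
    theta s (-x) x = (if s = true then (-1 : ℂ) else 1) := by
  cases s with
  | false => simp [theta]
  | true =>
    simp only [theta, if_true]
    rcases sign_dichotomy x (hx rfl) with h | h <;>
      rw [Int.sign_neg, h] <;> norm_num

lemma theta_neg_right {s : Bool} {x : ℤ} (hx : s = true → x ≠ 0) :
    theta s x (-x) = (if s = true then (-1 : ℂ) else 1) := by
  cases s with
  | false => simp [theta]
  | true =>
    simp only [theta, if_true]
    rcases sign_dichotomy x (hx rfl) with h | h <;>
      rw [Int.sign_neg, h] <;> norm_num

lemma theta_mul_theta {s : Bool} {x y : ℤ} (hx : s = true → x ≠ 0)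
    (hy : s = true → y ≠ 0) :
    theta s x y * theta s y x = 1 := by
  cases s with
  | false => simp [theta]
  | true =>
    simp only [theta, if_true]
    rcases sign_dichotomy x (hx rfl) with h1 | h1 <;>
      rcases sign_dichotomy y (hy rfl) with h2 | h2 <;>
        rw [h1, h2] <;> norm_num

lemma theta_cross {s : Bool} {x y : ℤ} (hx : s = true → x ≠ 0)
    (hy : s = true → y ≠ 0) :
    theta s (-x) y * theta s x y = (if s = true then (-1 : ℂ) else 1) := by
  cases s with
  | false => simp [theta]
  | true =>
    simp only [theta, if_true]
    rcases sign_dichotomy x (hx rfl) with h1 | h1 <;>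
      rcases sign_dichotomy y (hy rfl) with h2 | h2 <;>
        rw [Int.sign_neg, h1, h2] <;> norm_num

lemma idx_ne_zero (hz : zero = false) (m : Idx n zero) : m.1 ≠ 0 := by
  subst hz
  have := m.2
  simp only [idxSet, Bool.false_eq_true, if_false, Finset.mem_erase] at this
  exact this.1

lemma card_idx (hn : 1 ≤ n) :
    (Fintype.card (Idx n zero) : ℂ) = ((if zero then 2*n+1 else 2*n : ℕ) : ℂ) := by
  congr 1
  rw [Fintype.card_coe]
  cases zero with
  | true =>
    simp only [idxSet, if_true, Int.card_Icc]
    try omega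
  | false =>
    simp only [idxSet, Bool.false_eq_true, if_false]
    rw [Finset.card_erase_of_mem (by simp), Int.card_Icc]
    omega

lemma idxSet_subset : idxSet n zero ⊆ Finset.Icc (-(n : ℤ)) n := by
  cases zero with
  | true => simp [idxSet]
  | false => simp only [idxSet, Bool.false_eq_true, if_false]; exact Finset.erase_subset _ _

set_option maxHeartbeats 1000000 in
lemma extract (hz : sympl = true → zero = false)
    (ζ w A B C : ℂ) (a b : Idx n zero)
    (hab : a ≠ b) (hanb : a ≠ negIdx b) (hbnb : b ≠ negIdx b)
    (ha0 : sympl = true → a.1 ≠ 0)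
    (heq :
      (w • (F sympl a b ⊗ₖ (1 : Matrix (Idx n zero) (Idx n zero) ℂ)) +
          (ζ / 2) • ((F sympl a b ⊗ₖ (1 : Matrix (Idx n zero) (Idx n zero) ℂ)) *
              (Pmat n zero - Qmat n zero sympl)
            - (Pmat n zero - Qmat n zero sympl) *
              (F sympl a b ⊗ₖ (1 : Matrix (Idx n zero) (Idx n zero) ℂ)))) *
        (A • (1 : Matrix (Idx n zero × Idx n zero) (Idx n zero × Idx n zero) ℂ)
          + B • Pmat n zero + C • Qmat n zero sympl)
      = (A • (1 : Matrix (Idx n zero × Idx n zero) (Idx n zero × Idx n zero) ℂ)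
          + B • Pmat n zero + C • Qmat n zero sympl) *
        (w • (F sympl a b ⊗ₖ (1 : Matrix (Idx n zero) (Idx n zero) ℂ)) -
          (ζ / 2) • ((F sympl a b ⊗ₖ (1 : Matrix (Idx n zero) (Idx n zero) ℂ)) *
              (Pmat n zero - Qmat n zero sympl)
            - (Pmat n zero - Qmat n zero sympl) *
              (F sympl a b ⊗ₖ (1 : Matrix (Idx n zero) (Idx n zero) ℂ))))) :
    ζ * A = -(w * B) ∧ (w - ζ * kappa n zero sympl) * C = ζ * A := by
  have hb0 : b.1 ≠ 0 := fun h => hbnb (Subtype.ext (by simp [h]))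
  have hba : b ≠ a := Ne.symm hab
  have hnba : negIdx b ≠ a := fun h => hanb h.symm
  have hbna : b ≠ negIdx a := fun h => hanb (by rw [h, negIdx_negIdx])
  have hnab : negIdx a ≠ b := fun h => hbna h.symm
  have hnbb : negIdx b ≠ b := Ne.symm hbnb
  have hnbna : negIdx b ≠ negIdx a := fun h => hba (negIdx_inj.mp h)
  have hnanb : negIdx a ≠ negIdx b := fun h => hab (negIdx_inj.mp h)
  have hXab : F sympl a b a b = 1 := by
    simp [F, Matrix.sub_apply, Matrix.smul_apply, E_apply, hanb]
  have hXnbna : F sympl a b (negIdx b) (negIdx a) = -theta sympl a.1 b.1 := by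
    simp [F, Matrix.sub_apply, Matrix.smul_apply, E_apply, hnba]
  have hθbb : theta sympl b.1 b.1 = 1 := theta_same (fun _ => hb0)
  have hθnbb : theta sympl (-b.1) b.1 = (if sympl = true then (-1 : ℂ) else 1) :=
    theta_neg_left (fun _ => hb0)
  have hθbnb : theta sympl b.1 (-b.1) = (if sympl = true then (-1 : ℂ) else 1) :=
    theta_neg_right (fun _ => hb0)
  have hθcross : theta sympl (-a.1) b.1 * theta sympl a.1 b.1
      = (if sympl = true then (-1 : ℂ) else 1) :=
    theta_cross ha0 (fun _ => hb0)
  rw [show (w • (F sympl a b ⊗ₖ (1 : Matrix (Idx n zero) (Idx n zero) ℂ)) -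
          (ζ / 2) • ((F sympl a b ⊗ₖ (1 : Matrix (Idx n zero) (Idx n zero) ℂ)) *
              (Pmat n zero - Qmat n zero sympl)
            - (Pmat n zero - Qmat n zero sympl) *
              (F sympl a b ⊗ₖ (1 : Matrix (Idx n zero) (Idx n zero) ℂ)))) =
      (w • (F sympl a b ⊗ₖ (1 : Matrix (Idx n zero) (Idx n zero) ℂ)) +
          ((-ζ) / 2) • ((F sympl a b ⊗ₖ (1 : Matrix (Idx n zero) (Idx n zero) ℂ)) *
              (Pmat n zero - Qmat n zero sympl)
            - (Pmat n zero - Qmat n zero sympl) *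
              (F sympl a b ⊗ₖ (1 : Matrix (Idx n zero) (Idx n zero) ℂ)))) from by
    rw [neg_div, neg_smul, sub_eq_add_neg]] at heq
  constructor
  · have h1 := congrFun (congrFun heq (a, b)) (b, b)
    rw [mul_R_apply, R_mul_apply, if_neg hbnb, if_neg hbna] at h1
    simp only [L_apply'] at h1
    simp only [if_pos rfl, if_true, eq_self_iff_true, if_neg hab, if_neg hba, if_neg hanb, if_neg hnba,
      if_neg hbna, if_neg hnab, if_neg hbnb, if_neg hnbb, hXab, mul_zero,
      mul_one, sub_zero, zero_sub, add_zero, zero_add, mul_neg] at h1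
    linear_combination h1
  · have h2 := congrFun (congrFun heq (a, negIdx b)) (b, negIdx b)
    rw [mul_R_apply, R_mul_apply, if_pos rfl, if_neg hnbna] at h2
    have hterm : ∀ m : Idx n zero, m ∈ (Finset.univ : Finset (Idx n zero)) →
        theta sympl m.1 b.1 *
          (w • (F sympl a b ⊗ₖ (1 : Matrix (Idx n zero) (Idx n zero) ℂ)) +
            (ζ / 2) • ((F sympl a b ⊗ₖ (1 : Matrix (Idx n zero) (Idx n zero) ℂ)) *
                (Pmat n zero - Qmat n zero sympl)
              - (Pmat n zero - Qmat n zero sympl) *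
                (F sympl a b ⊗ₖ (1 : Matrix (Idx n zero) (Idx n zero) ℂ))))
            (a, negIdx b) (m, negIdx m)
        = (if m = b then w else 0) + ζ / 2 *
            ((if m = negIdx b then (if sympl = true then (-1 : ℂ) else 1) else 0)
              - theta sympl m.1 b.1 * theta sympl b.1 m.1
              + (if m = negIdx a then (if sympl = true then (-1 : ℂ) else 1) else 0)) := by
      intro m _
      rw [L_apply']
      by_cases hm1 : m = b
      · subst hm1
        simp only [negIdx_negIdx, negIdx_val, neg_neg, if_pos rfl, if_true, eq_self_iff_true, if_neg hnbb,
          if_neg hanb, if_neg hnbna, if_neg hbnb, if_neg hbna, hXab, mul_one,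
          mul_zero, sub_zero, zero_sub, add_zero, zero_add]
        rw [hθbb]
        ring
      · by_cases hm2 : m = negIdx b
        · subst hm2
          simp only [negIdx_negIdx, negIdx_val, neg_neg, if_pos rfl, if_true, eq_self_iff_true, if_neg hnbb,
            if_neg hab, if_neg hnbna, hXab, mul_one, mul_zero, sub_zero,
            zero_sub, add_zero, zero_add, if_neg hnba]
          rw [hθnbb, hθbnb]
          ring
        · by_cases hm3 : m = negIdx a
          · subst hm3
            simp only [negIdx_negIdx, negIdx_val, neg_neg, if_pos rfl, if_true, eq_self_iff_true,
              if_neg hnba, if_neg hnbna, if_neg hnab, if_neg hnanb, hXab,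
              hXnbna, mul_one, mul_zero, sub_zero, zero_sub, add_zero, zero_add]
            linear_combination (ζ / 2) * hθcross
          · have hm1' : ¬(negIdx b = negIdx m) := fun h => hm1 (negIdx_inj.mp h).symm
            have hm2' : ¬(negIdx b = m) := fun h => hm2 h.symm
            have hm3' : ¬(a = negIdx m) := fun h => hm3 (by rw [eq_negIdx_iff] at h; exact h.symm)
            simp only [negIdx_negIdx, negIdx_val, neg_neg, if_pos rfl, if_true, eq_self_iff_true, if_neg hm1',
              if_neg hm2', if_neg hm3', if_neg hnbna, if_neg hm1, if_neg hm2,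
              if_neg hm3, hXab, mul_one, mul_zero, sub_zero, zero_sub, add_zero,
              zero_add]
            ring
    rw [Finset.sum_congr rfl hterm] at h2
    have hn1 : 1 ≤ n := by
      have hbmem := idxSet_subset b.2
      simp only [Finset.mem_Icc] at hbmem
      omega
    have hNsum : (∑ m : Idx n zero,
        ((if m = b then w else 0) + ζ / 2 *
          ((if m = negIdx b then (if sympl = true then (-1 : ℂ) else 1) else 0)
            - theta sympl m.1 b.1 * theta sympl b.1 m.1
            + (if m = negIdx a then (if sympl = true then (-1 : ℂ) else 1) else 0))))
        = w - ζ * kappa n zero sympl := by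
      rw [Finset.sum_add_distrib, ← Finset.mul_sum]
      have hth : (∑ m : Idx n zero, theta sympl m.1 b.1 * theta sympl b.1 m.1)
          = ((if zero then 2*n+1 else 2*n : ℕ) : ℂ) := by
        rw [Finset.sum_congr rfl (fun m _ =>
          theta_mul_theta (fun h => idx_ne_zero (hz h) m) (fun _ => hb0))]
        rw [Finset.sum_const, Finset.card_univ, nsmul_eq_mul, mul_one]
        exact_mod_cast card_idx (zero := zero) hn1
      rw [Finset.sum_add_distrib, Finset.sum_sub_distrib, hth]
      simp only [Finset.sum_ite_eq', Finset.mem_univ, if_pos]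
      by_cases hsy : sympl = true <;> simp only [hsy, if_pos, if_true, if_false,
        kappa, Bool.false_eq_true, if_neg] <;> ring_nf
    rw [hNsum] at h2
    simp only [L_apply'] at h2
    simp only [negIdx_negIdx, negIdx_val, neg_neg, if_pos rfl, if_true, eq_self_iff_true, if_neg hab,
      if_neg hba, if_neg hanb, if_neg hnba, if_neg hbna, if_neg hnab,
      if_neg hbnb, if_neg hnbb, if_neg hnbna, if_neg hnanb, hXab, hXnbna,
      mul_zero, mul_one, sub_zero, zero_sub, add_zero, zero_add, mul_neg] at h2
    rw [hθbb, hθbnb] at h2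
    linear_combination h2 - B * (ζ / 2) * hθcross

lemma assemble (ζ w A B C : ℂ) (hw : w ≠ 0)
    (hwk : w - ζ * kappa n zero sympl ≠ 0)
    (k1 : ζ * A = -(w * B)) (k2 : (w - ζ * kappa n zero sympl) * C = ζ * A) :
    A • (1 : Matrix (Idx n zero × Idx n zero) (Idx n zero × Idx n zero) ℂ)
        + B • Pmat n zero + C • Qmat n zero sympl
      = A • ((1 : Matrix (Idx n zero × Idx n zero) (Idx n zero × Idx n zero) ℂ)
          - (ζ / w) • Pmat n zero
          + (ζ / (w - ζ * kappa n zero sympl)) • Qmat n zero sympl) := by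
  have hB : B = -(A * (ζ / w)) := by
    field_simp
    linear_combination k1
  have hC : C = A * (ζ / (w - ζ * kappa n zero sympl)) := by
    field_simp
    linear_combination k2
  rw [hB, hC, smul_add, smul_sub, smul_smul, smul_smul, neg_smul, ← sub_eq_add_neg]

end Aux

/-- if `R(w) = A·I + B·P + C·Q` satisfies the intertwining equation
`(w(X⊗1) + ½ζ[X⊗1, P−Q]) R(w) = R(w) (w(X⊗1) − ½ζ[X⊗1, P−Q])` for all `X ∈ g_N`
(with `N > 2`), then `ζA = −wB` and `(w − ζκ)C = ζA`; consequently
`R(w) = A(I − (ζ/w)P + (ζ/(w−ζκ))Q)`. -/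
theorem statement18 (n : ℕ) (zero sympl : Bool) (hs : sympl = true → zero = false)
    (hN : 2 < (if zero then 2 * n + 1 else 2 * n))
    (ζ w A B C : ℂ) (hw : w ≠ 0) (hwk : w - ζ * kappa n zero sympl ≠ 0)
    (hR : ∀ X : Matrix (Idx n zero) (Idx n zero) ℂ,
      X ∈ Submodule.span ℂ
        (Set.range fun p : Idx n zero × Idx n zero => F sympl p.1 p.2) →
      (w • (X ⊗ₖ (1 : Matrix (Idx n zero) (Idx n zero) ℂ)) +
          (ζ / 2) • ((X ⊗ₖ (1 : Matrix (Idx n zero) (Idx n zero) ℂ)) *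
              (Pmat n zero - Qmat n zero sympl)
            - (Pmat n zero - Qmat n zero sympl) *
              (X ⊗ₖ (1 : Matrix (Idx n zero) (Idx n zero) ℂ)))) *
        (A • (1 : Matrix (Idx n zero × Idx n zero) (Idx n zero × Idx n zero) ℂ)
          + B • Pmat n zero + C • Qmat n zero sympl)
      = (A • (1 : Matrix (Idx n zero × Idx n zero) (Idx n zero × Idx n zero) ℂ)
          + B • Pmat n zero + C • Qmat n zero sympl) *
        (w • (X ⊗ₖ (1 : Matrix (Idx n zero) (Idx n zero) ℂ)) -
          (ζ / 2) • ((X ⊗ₖ (1 : Matrix (Idx n zero) (Idx n zero) ℂ)) *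
              (Pmat n zero - Qmat n zero sympl)
            - (Pmat n zero - Qmat n zero sympl) *
              (X ⊗ₖ (1 : Matrix (Idx n zero) (Idx n zero) ℂ))))) :
    ζ * A = -(w * B) ∧ (w - ζ * kappa n zero sympl) * C = ζ * A ∧
    A • (1 : Matrix (Idx n zero × Idx n zero) (Idx n zero × Idx n zero) ℂ)
        + B • Pmat n zero + C • Qmat n zero sympl
      = A • ((1 : Matrix (Idx n zero × Idx n zero) (Idx n zero × Idx n zero) ℂ)
          - (ζ / w) • Pmat n zero
          + (ζ / (w - ζ * kappa n zero sympl)) • Qmat n zero sympl) := by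
  rcases Bool.eq_false_or_eq_true zero with hz0 | hz0
  · -- zero = true : use a = 0, b = 1
    subst hz0
    have hsy : sympl = false := by
      rcases Bool.eq_false_or_eq_true sympl with h | h
      · exact absurd (hs h) (by simp)
      · exact h
    have hn1 : 1 ≤ n := by
      rw [if_pos rfl] at hN; omega
    have hamem : (0 : ℤ) ∈ idxSet n true := by
      simp only [idxSet, if_true, Finset.mem_Icc]; omega
    have hbmem : (1 : ℤ) ∈ idxSet n true := by
      simp only [idxSet, if_true, Finset.mem_Icc]; omega
    set a : Idx n true := ⟨0, hamem⟩ with ha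
    set b : Idx n true := ⟨1, hbmem⟩ with hb
    have hab : a ≠ b := by simp [ha, hb, Subtype.ext_iff]
    have hanb : a ≠ negIdx b := by simp [ha, hb, Subtype.ext_iff]
    have hbnb : b ≠ negIdx b := by simp [hb, Subtype.ext_iff]
    have ha0 : sympl = true → a.1 ≠ 0 := by simp [hsy]
    have hkeys := extract hs ζ w A B C a b hab hanb hbnb ha0
      (hR (F sympl a b) (Submodule.subset_span ⟨(a, b), rfl⟩))
    exact ⟨hkeys.1, hkeys.2, assemble ζ w A B C hw hwk hkeys.1 hkeys.2⟩

  · -- zero = false : use a = 1, b = 2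
    subst hz0
    have hn2 : 2 ≤ n := by
      rw [if_neg (by simp)] at hN; omega
    have hamem : (1 : ℤ) ∈ idxSet n false := by
      simp only [idxSet, Bool.false_eq_true, if_false, Finset.mem_erase,
        Finset.mem_Icc]
      omega
    have hbmem : (2 : ℤ) ∈ idxSet n false := by
      simp only [idxSet, Bool.false_eq_true, if_false, Finset.mem_erase,
        Finset.mem_Icc]
      omega
    set a : Idx n false := ⟨1, hamem⟩ with ha
    set b : Idx n false := ⟨2, hbmem⟩ with hb
    have hab : a ≠ b := by simp [ha, hb, Subtype.ext_iff]
    have hanb : a ≠ negIdx b := by simp [ha, hb, Subtype.ext_iff]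
    have hbnb : b ≠ negIdx b := by simp [hb, Subtype.ext_iff]
    have ha0 : sympl = true → a.1 ≠ 0 := by simp [ha]
    have hkeys := extract hs ζ w A B C a b hab hanb hbnb ha0
      (hR (F sympl a b) (Submodule.subset_span ⟨(a, b), rfl⟩))
    exact ⟨hkeys.1, hkeys.2, assemble ζ w A B C hw hwk hkeys.1 hkeys.2⟩


end Yangian
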